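/- arXiv:2311.12038 — 4 statements merged into one kernel-verified Lean document; each statement's English description precedes it below -/
import Mathlib

section
/- Let x, y be odd positive integers not divisible by 3 and let n, m be positive integers with 2^n * x ≡ 1 (mod 3) and 2^m * y ≡ 1 (mod 3). If x ≠ y then (2^n * x - 1)/3 ≠ (2^m * y - 1)/3. -/
lemma aux_pow_eq (x y n m : ℕ) (hx : Odd x) (hy : Odd y)
    (h : 2 ^ n * x = 2 ^ m * y) : x = y := by
  induction n generalizing m with
  | zero =>
    cases m with
    | zero => simpa using h
    | succ m =>
      exfalso
      simp only [pow_zero, one_mul] at h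
      rcases hx with ⟨k, hk⟩
      have : 2 ∣ 2 ^ (m+1) * y := Dvd.dvd.mul_right (dvd_pow_self 2 (Nat.succ_ne_zero m)) y
      omega
  | succ n ih =>
    cases m with
    | zero =>
      exfalso
      simp only [pow_zero, one_mul] at h
      rcases hy with ⟨k, hk⟩
      subst hk
      have : 2 ∣ 2 ^ (n+1) * x := Dvd.dvd.mul_right (dvd_pow_self 2 (Nat.succ_ne_zero n)) x
      omega
    | succ m =>
      apply ih m
      have : 2 * (2 ^ n * x) = 2 * (2 ^ m * y) := by ring_nf; ring_nf at h; linarith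
      omega

theorem stmt_1 (x y n m : ℕ) (hx : Odd x) (hxpos : 0 < x) (hx3 : ¬ 3 ∣ x)
    (hy : Odd y) (hypos : 0 < y) (hy3 : ¬ 3 ∣ y)
    (hn : 0 < n) (hm : 0 < m)
    (hxn : (2 ^ n * x) % 3 = 1) (hym : (2 ^ m * y) % 3 = 1)
    (hne : x ≠ y) :
    (2 ^ n * x - 1) / 3 ≠ (2 ^ m * y - 1) / 3 := by
  intro h
  have hxpos' : 0 < 2 ^ n * x := by positivity
  have hypos' : 0 < 2 ^ m * y := by positivity
  have hdx : 3 ∣ 2 ^ n * x - 1 := by omega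
  have hdy : 3 ∣ 2 ^ m * y - 1 := by omega
  have heq : 2 ^ n * x = 2 ^ m * y := by omega
  exact hne (aux_pow_eq x y n m hx hy heq)
end

section
/- For every nonnegative integer n: 3^(n+1) divides 2^(2·3^n) - 1, and 3 does not divide 2^(3^n) - 1. -/
lemma aux_int_dvd (n : ℕ) : (3:ℤ) ^ (n + 1) ∣ 4 ^ (3 ^ n) - 1 := by
  induction n with
  | zero => norm_num
  | succ n ih =>
    have hx : (4:ℤ) ^ (3 ^ (n + 1)) - 1
        = (4 ^ (3 ^ n) - 1) * ((4 ^ (3 ^ n)) ^ 2 + 4 ^ (3 ^ n) + 1) := by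
      rw [pow_succ, pow_mul]; ring
    rw [hx, pow_succ]
    apply mul_dvd_mul ih
    have h3 : (3:ℤ) ∣ 4 ^ (3 ^ n) - 1 := dvd_trans (dvd_pow_self 3 (Nat.succ_ne_zero n)) ih
    obtain ⟨k, hk⟩ := h3
    have : (4:ℤ) ^ (3 ^ n) = 3 * k + 1 := by linarith
    rw [this]; ring_nf
    exact ⟨1 + k * 3 + k ^ 2 * 3, by ring⟩

lemma aux_mod (n : ℕ) : 2 ^ (3 ^ n) % 3 = 2 := by
  induction n with
  | zero => norm_num
  | succ n ih =>
    rw [pow_succ, mul_comm, pow_mul, Nat.pow_mod]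
    norm_num
    exact ih

theorem stmt_10 (n : ℕ) :
    3 ^ (n + 1) ∣ 2 ^ (2 * 3 ^ n) - 1 ∧ ¬ 3 ∣ 2 ^ (3 ^ n) - 1 := by
  constructor
  · have h := aux_int_dvd n
    have h1 : 1 ≤ 2 ^ (2 * 3 ^ n) := Nat.one_le_two_pow
    have : ((2 ^ (2 * 3 ^ n) - 1 : ℕ) : ℤ) = 4 ^ (3 ^ n) - 1 := by
      push_cast [h1]
      rw [show (4:ℤ) = 2 ^ 2 by norm_num, ← pow_mul]
    rw [← Int.natCast_dvd_natCast]
    push_cast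
    rw [this]
    exact h
  · have h1 : 2 ^ (3 ^ n) % 3 = 2 := aux_mod n
    have h2 : 1 ≤ 2 ^ (3 ^ n) := Nat.one_le_two_pow
    omega
end

section
/- If x₁, x₂ are positive odd integers and m₁, m₂ positive integers satisfying x₂ = (3x₁ + 1)/2^(m₂) and x₁ = (3x₂ + 1)/2^(m₁) (i.e., a 2-cycle of the descending operation), then x₁ = x₂ = 1 and m₁ = m₂ = 2. -/
lemma stmt_16_aux (x₁ x₂ m₁ m₂ : ℕ) (hx₁pos : 0 < x₁)
    (hx₂pos : 0 < x₂) (hm₁ : 0 < m₁) (hm₂ : 0 < m₂)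
    (h₂ : 2 ^ m₂ * x₂ = 3 * x₁ + 1) (h₁ : 2 ^ m₁ * x₁ = 3 * x₂ + 1)
    (hle : x₁ ≤ x₂) :
    x₁ = 1 ∧ x₂ = 1 ∧ m₁ = 2 ∧ m₂ = 2 := by
  -- 2^m₂ ≤ 4
  have hb : 2 ^ m₂ * x₂ ≤ 4 * x₂ := by omega
  have hp : 2 ^ m₂ ≤ 4 := Nat.le_of_mul_le_mul_right hb hx₂pos
  have hm₂2 : m₂ ≤ 2 := by
    by_contra h
    push_neg at h
    have := Nat.pow_le_pow_right (by norm_num : 1 ≤ 2) h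
    simp at this
    omega
  interval_cases m₂
  · -- m₂ = 1 : 2 x₂ = 3 x₁ + 1
    norm_num at h₂
    have e : 2 ^ (m₁ + 1) * x₁ = 9 * x₁ + 5 := by
      have h : 2 ^ (m₁ + 1) * x₁ = 2 * (2 ^ m₁ * x₁) := by ring
      rw [h, h₁]; omega
    have hb' : 2 ^ (m₁ + 1) * x₁ ≤ 14 * x₁ := by omega
    have hp' : 2 ^ (m₁ + 1) ≤ 14 := Nat.le_of_mul_le_mul_right hb' hx₁pos
    have hm₁3 : m₁ + 1 < 4 := by
      by_contra h
      push_neg at h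
      have := Nat.pow_le_pow_right (by norm_num : 1 ≤ 2) h
      simp at this
      omega
    have hub : m₁ ≤ 2 := by omega
    interval_cases m₁ <;> norm_num at e <;> omega
  · -- m₂ = 2 : 4 x₂ = 3 x₁ + 1 ≤ 3 x₂ + 1, so x₂ = 1, x₁ = 1
    norm_num at h₂
    have hx2 : x₂ = 1 := by omega
    have hx1 : x₁ = 1 := by omega
    subst hx1 hx2
    have : 2 ^ m₁ = 2 ^ 2 := by omega
    have hm : m₁ = 2 := Nat.pow_right_injective (by norm_num) this
    exact ⟨rfl, rfl, hm, rfl⟩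

theorem stmt_16 (x₁ x₂ m₁ m₂ : ℕ) (hx₁ : Odd x₁) (hx₁pos : 0 < x₁)
    (hx₂ : Odd x₂) (hx₂pos : 0 < x₂) (hm₁ : 0 < m₁) (hm₂ : 0 < m₂)
    (h₂ : 2 ^ m₂ * x₂ = 3 * x₁ + 1) (h₁ : 2 ^ m₁ * x₁ = 3 * x₂ + 1) :
    x₁ = 1 ∧ x₂ = 1 ∧ m₁ = 2 ∧ m₂ = 2 := by
  rcases le_total x₁ x₂ with h | h
  · exact stmt_16_aux x₁ x₂ m₁ m₂ hx₁pos hx₂pos hm₁ hm₂ h₂ h₁ h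
  · obtain ⟨a, b, c, d⟩ := stmt_16_aux x₂ x₁ m₂ m₁ hx₂pos hx₁pos hm₂ hm₁ h₁ h₂ h
    exact ⟨b, a, d, c⟩
end

section
/- If x₁, x₂, x₃ are positive odd integers and m₁, m₂, m₃ positive integers with x₂ = (3x₁+1)/2^(m₂), x₃ = (3x₂+1)/2^(m₃), and x₁ = (3x₃+1)/2^(m₁), then x₁ = x₂ = x₃ = 1 and m₁ = m₂ = m₃ = 2. -/
/-- No odd integers `1 ≤ x ≤ y ≤ z` satisfy `5xyz = 9(xy+yz+zx)+3(x+y+z)+1`. -/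
lemma key_sorted (x y z : ℤ) (hx : Odd x) (hy : Odd y) (hz : Odd z)
    (hx1 : 1 ≤ x) (hy1 : 1 ≤ y) (hz1 : 1 ≤ z) (hxy : x ≤ y) (hyz : y ≤ z)
    (h : 5 * x * y * z = 9 * (x * y + y * z + z * x) + 3 * (x + y + z) + 1) :
    False := by
  have hx2 : x % 2 = 1 := Int.odd_iff.mp hx
  have hcase : x = 1 ∨ x = 3 ∨ x = 5 ∨ 7 ≤ x := by omega
  rcases hcase with rfl | rfl | rfl | hx7
  · -- x = 1 : 5yz = 9(y + yz + z) + 3(1+y+z)+1, impossible since 5yz < 9yz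
    nlinarith [mul_le_mul hy1 hz1 (by linarith : (0:ℤ) ≤ 1) (by linarith : (0:ℤ) ≤ y)]
  · -- x = 3 : reduces to 3*(y*z) = 15*y + 15*z + 5, impossible mod 3
    have h' : 3 * (y * z) = 15 * y + 15 * z + 5 := by linarith [h]
    obtain ⟨w, hw⟩ : ∃ w, w = y * z := ⟨_, rfl⟩
    rw [← hw] at h'
    omega
  · -- x = 5 : reduces to y*z = 3*y + 3*z + 1, impossible mod 4 for odd y, z
    have h' : y * z = 3 * y + 3 * z + 1 := by linarith [h]
    obtain ⟨a, ha⟩ := hy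
    obtain ⟨b, hb⟩ := hz
    subst ha hb
    have h'' : 4 * (a * b) = 4 * a + 4 * b + 6 := by linarith [h']
    obtain ⟨w, hw⟩ : ∃ w, w = a * b := ⟨_, rfl⟩
    rw [← hw] at h''
    omega
  · -- 7 ≤ x ≤ y ≤ z : size contradiction
    have hy7 : 7 ≤ y := le_trans hx7 hxy
    have hz7 : 7 ≤ z := le_trans hy7 hyz
    have hxy0 : (0:ℤ) ≤ x * y := by positivity
    have hyz0 : (0:ℤ) ≤ y * z := by positivity
    have hzx0 : (0:ℤ) ≤ z * x := by positivity
    have hp : (x * y) * 7 ≤ (x * y) * z := mul_le_mul_of_nonneg_left hz7 hxy0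
    have hq : (y * z) * 7 ≤ (y * z) * x := mul_le_mul_of_nonneg_left hx7 hyz0
    have hr : (z * x) * 7 ≤ (z * x) * y := mul_le_mul_of_nonneg_left hy7 hzx0
    have h49 : (49:ℤ) ≤ y * z := by nlinarith
    have h49' : (49:ℤ) ≤ x * y := by nlinarith
    have h49'' : (49:ℤ) ≤ z * x := by nlinarith
    have ha : x * 49 ≤ x * (y * z) :=
      mul_le_mul_of_nonneg_left h49 (by linarith)
    have hb : y * 49 ≤ y * (z * x) :=
      mul_le_mul_of_nonneg_left h49'' (by linarith)
    have hc : z * 49 ≤ z * (x * y) :=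
      mul_le_mul_of_nonneg_left h49' (by linarith)
    have hw : (343:ℤ) ≤ x * (y * z) := by nlinarith
    nlinarith [h, hp, hq, hr, ha, hb, hc, hw]

/-- No odd positive integers satisfy `5xyz = 9(xy+yz+zx)+3(x+y+z)+1`. -/
lemma key (x y z : ℤ) (hx : Odd x) (hy : Odd y) (hz : Odd z)
    (hx1 : 1 ≤ x) (hy1 : 1 ≤ y) (hz1 : 1 ≤ z)
    (h : 5 * x * y * z = 9 * (x * y + y * z + z * x) + 3 * (x + y + z) + 1) :
    False := by
  rcases le_total x y with h1 | h1 <;> rcases le_total y z with h2 | h2 <;>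
    rcases le_total x z with h3 | h3
  · exact key_sorted x y z hx hy hz hx1 hy1 hz1 h1 h2 (by linear_combination h)
  · exact key_sorted x y z hx hy hz hx1 hy1 hz1 h1 h2 (by linear_combination h)
  · exact key_sorted x z y hx hz hy hx1 hz1 hy1 h3 h2 (by linear_combination h)
  · exact key_sorted z x y hz hx hy hz1 hx1 hy1 h3 h1 (by linear_combination h)
  · exact key_sorted y x z hy hx hz hy1 hx1 hz1 h1 h3 (by linear_combination h)
  · exact key_sorted y z x hy hz hx hy1 hz1 hx1 h2 h3 (by linear_combination h)
  · exact key_sorted z y x hz hy hx hz1 hy1 hx1 h2 h1 (by linear_combination h)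
  · exact key_sorted z y x hz hy hx hz1 hy1 hx1 h2 h1 (by linear_combination h)

theorem stmt_17 (x₁ x₂ x₃ m₁ m₂ m₃ : ℕ)
    (hx₁ : Odd x₁) (hx₁pos : 0 < x₁) (hx₂ : Odd x₂) (hx₂pos : 0 < x₂)
    (hx₃ : Odd x₃) (hx₃pos : 0 < x₃)
    (hm₁ : 0 < m₁) (hm₂ : 0 < m₂) (hm₃ : 0 < m₃)
    (h₂ : 2 ^ m₂ * x₂ = 3 * x₁ + 1) (h₃ : 2 ^ m₃ * x₃ = 3 * x₂ + 1)
    (h₁ : 2 ^ m₁ * x₁ = 3 * x₃ + 1) :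
    x₁ = 1 ∧ x₂ = 1 ∧ x₃ = 1 ∧ m₁ = 2 ∧ m₂ = 2 ∧ m₃ = 2 := by
  have hprod : 2 ^ (m₁ + m₂ + m₃) * (x₁ * x₂ * x₃) =
      (3 * x₁ + 1) * (3 * x₂ + 1) * (3 * x₃ + 1) := by
    rw [← h₁, ← h₂, ← h₃, pow_add, pow_add]
    ring
  have hwpos : 0 < x₁ * x₂ * x₃ := by positivity
  -- auxiliary product bounds
  have p1 : x₁ * x₂ ≤ x₁ * x₂ * x₃ := Nat.le_mul_of_pos_right _ hx₃pos
  have p2 : x₂ * x₃ ≤ x₁ * (x₂ * x₃) := Nat.le_mul_of_pos_left _ hx₁pos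
  have p3 : x₃ * x₁ ≤ x₂ * (x₃ * x₁) := Nat.le_mul_of_pos_left _ hx₂pos
  have q1 : x₁ ≤ x₁ * x₂ := Nat.le_mul_of_pos_right _ hx₂pos
  have q2 : x₂ ≤ x₂ * x₃ := Nat.le_mul_of_pos_right _ hx₃pos
  have q3 : x₃ ≤ x₃ * x₁ := Nat.le_mul_of_pos_right _ hx₁pos
  -- upper bound: 2^M ≤ 64
  have hub : 2 ^ (m₁ + m₂ + m₃) ≤ 64 := by
    have hle : 2 ^ (m₁ + m₂ + m₃) * (x₁ * x₂ * x₃) ≤ 64 * (x₁ * x₂ * x₃) := by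
      rw [hprod]
      nlinarith [p1, p2, p3, q1, q2, q3, hwpos]
    exact Nat.le_of_mul_le_mul_right (by linarith [hle]) hwpos
  -- lower bound: 2^M ≥ 28
  have hlb : 28 ≤ 2 ^ (m₁ + m₂ + m₃) := by
    by_contra hcon
    push_neg at hcon
    have hle : 2 ^ (m₁ + m₂ + m₃) * (x₁ * x₂ * x₃) ≤ 27 * (x₁ * x₂ * x₃) :=
      Nat.mul_le_mul_right _ (by omega)
    rw [hprod] at hle
    nlinarith [p1, p2, p3, q1, q2, q3, hwpos]
  have hM6 : m₁ + m₂ + m₃ ≤ 6 := by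
    by_contra hcon
    push_neg at hcon
    have : 2 ^ 7 ≤ 2 ^ (m₁ + m₂ + m₃) := Nat.pow_le_pow_right (by norm_num) hcon
    norm_num at this
    omega
  have hM5 : 5 ≤ m₁ + m₂ + m₃ := by
    by_contra hcon
    push_neg at hcon
    have : 2 ^ (m₁ + m₂ + m₃) ≤ 2 ^ 4 := Nat.pow_le_pow_right (by norm_num) (by omega)
    norm_num at this
    omega
  have hM : m₁ + m₂ + m₃ = 5 ∨ m₁ + m₂ + m₃ = 6 := by omega
  rcases hM with hM | hM
  · -- M = 5 : impossible
    exfalso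
    rw [hM] at hprod
    norm_num at hprod
    have hZ : (5 : ℤ) * (x₁ : ℤ) * x₂ * x₃ =
        9 * ((x₁ : ℤ) * x₂ + (x₂ : ℤ) * x₃ + (x₃ : ℤ) * x₁) +
          3 * ((x₁ : ℤ) + x₂ + x₃) + 1 := by
      have hc := congrArg (fun n : ℕ => (n : ℤ)) hprod
      push_cast at hc
      linarith [hc]
    exact key (x₁ : ℤ) (x₂ : ℤ) (x₃ : ℤ)
      ((Int.odd_coe_nat x₁).mpr hx₁) ((Int.odd_coe_nat x₂).mpr hx₂)
      ((Int.odd_coe_nat x₃).mpr hx₃)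
      (by exact_mod_cast hx₁pos) (by exact_mod_cast hx₂pos) (by exact_mod_cast hx₃pos) hZ
  · -- M = 6 : forces x₁ = x₂ = x₃ = 1
    rw [hM] at hprod
    norm_num at hprod
    have r1 : x₁ ≤ x₁ * x₂ * x₃ := le_trans q1 p1
    have r2 : x₂ ≤ x₁ * x₂ * x₃ := by
      calc x₂ ≤ x₂ * x₃ := q2
        _ ≤ x₁ * (x₂ * x₃) := p2
        _ = x₁ * x₂ * x₃ := by ring
    have r3 : x₃ ≤ x₁ * x₂ * x₃ := by
      calc x₃ ≤ x₃ * x₁ := q3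
        _ ≤ x₂ * (x₃ * x₁) := p3
        _ = x₁ * x₂ * x₃ := by ring
    have hwle : x₁ * x₂ * x₃ ≤ 1 := by linarith [hprod, p1, p2, p3, r1, r2, r3]
    have hx1 : x₁ = 1 := by
      have : x₁ ≤ 1 := le_trans r1 hwle
      omega
    have hx2' : x₂ = 1 := by
      have : x₂ ≤ 1 := le_trans r2 hwle
      omega
    have hx3' : x₃ = 1 := by
      have : x₃ ≤ 1 := le_trans r3 hwle
      omega
    subst hx1; subst hx2'; subst hx3'
    have e₂ : (2:ℕ) ^ m₂ = 4 := by simpa using h₂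
    have e₃ : (2:ℕ) ^ m₃ = 4 := by simpa using h₃
    have e₁ : (2:ℕ) ^ m₁ = 4 := by simpa using h₁
    have i1 : m₁ = 2 := Nat.pow_right_injective (le_refl 2)
      (show (2:ℕ) ^ m₁ = 2 ^ 2 by rw [e₁])
    have i2 : m₂ = 2 := Nat.pow_right_injective (le_refl 2)
      (show (2:ℕ) ^ m₂ = 2 ^ 2 by rw [e₂])
    have i3 : m₃ = 2 := Nat.pow_right_injective (le_refl 2)
      (show (2:ℕ) ^ m₃ = 2 ^ 2 by rw [e₃])
    exact ⟨rfl, rfl, rfl, i1, i2, i3⟩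
end
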